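/- arXiv:1905.09803 — 2 statements merged into one kernel-verified Lean document; each statement's English description precedes it below -/
import Mathlib

section
/- There exist three-dimensional weight configurations showing failure of inverse stability when opposite weight vectors occur: with a_1^k = (k, k, 1/k), a_2^k = (−k, k, 1/k), a_3^k = (0, −√2 k, 1/(√2 k)), c^k = (k, k, √2 k), define Γ_k with first-layer rows −a_1^k, −a_2^k, −a_3^k and Θ_k with rows a_1^k, a_2^k, a_3^k, both with output weights c^k. Then c_1^k a_1^k + c_2^k a_2^k + c_3^k a_3^k = (0, 0, 3), R(Θ_k) − R(Γ_k) is the linear map x ↦ ⟨(0,0,3), x⟩, |R(Θ_k) − R(Γ_k)|_{W^{1,∞}} = 3, and for every parametrization Φ_k of architecture (3,3,1) with R(Φ_k) = R(Θ_k) it holds ‖Φ_k − Γ_k‖_∞ ≥ k. -/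
open MeasureTheory Filter Topology

/-- The Sobolev `W^{1,∞}` seminorm: essential supremum of the max-norm of the
(a.e.) gradient. -/
noncomputable def sobSemi (d : ℕ) (f : (Fin d → ℝ) → ℝ) : ℝ :=
  essSup (fun x : Fin d → ℝ => ⨆ j : Fin d, |fderiv ℝ f x (Pi.single j 1)|) volume

/-!
Since `t = ReLU t - ReLU (-t)`, the difference `R(Θ_k) - R(Γ_k)` is the linear map
`x ↦ ⟨∑ cᵢ aᵢ, x⟩ = 3 x₃`. For the lower bound let `Φ = (b, c')` realize `R(Θ_k)` and suppose
`‖Φ - Γ_k‖_∞ < k`; then all `c'ᵢ > 0`, as `cᵢ ≥ k`. Adding the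
realizations at `x` and `-x` gives `∑ c'ᵢ |⟨bᵢ, x⟩| = ∑ cᵢ |⟨aᵢ, x⟩|`, and comparing second
differences along lines shows that both sides have the same kinks; so each `bᵢ ≠ 0` is parallel
to some `aⱼ`. At a point where `⟨a₁, x⟩ = ⟨a₂, x⟩ = 0 < ⟨a₃, x⟩`, some `bᵢ` has `⟨bᵢ, x⟩ > 0`, so
it is a positive multiple of `a₃`; but every positive multiple of `a₃` is at sup-distance at
least `k` from each `-aᵢ`.
-/

section Kink

variable {ι : Type*} [Fintype ι]

lemma abs_add_add_abs_sub_of_abs_le {α x : ℝ} (h : |x| ≤ |α|) : |α + x| + |α - x| = 2 * |α| := by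
  rw [abs_le] at h
  cases abs_cases α <;> cases abs_cases (α + x) <;> cases abs_cases (α - x) <;> linarith

lemma eventually_abs_add_add_abs_sub (α β : ℝ) :
    ∀ᶠ t in 𝓝 0, |α + t * β| + |α - t * β| = 2 * |α| + 2 * |t| * (if α = 0 then |β| else 0) := by
  by_cases hα : α = 0
  · refine Eventually.of_forall fun t => ?_
    simp only [hα, if_true, zero_add, zero_sub, abs_neg, abs_mul, abs_zero]
    ring
  · have hlim : Tendsto (fun t : ℝ => |t * β|) (𝓝 0) (𝓝 0) := by
      simpa using ((continuous_id.mul continuous_const).abs.tendsto (0 : ℝ))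
    filter_upwards [hlim.eventually (ge_mem_nhds (abs_pos.2 hα))] with t ht
    rw [abs_add_add_abs_sub_of_abs_le ht, if_neg hα]
    ring

lemma eventually_sum_mul_abs_add_sum_mul_abs_neg (c α β : ι → ℝ) :
    ∀ᶠ t in 𝓝 0, ∑ i, c i * |α i + t * β i| + ∑ i, c i * |α i + -t * β i|
      = 2 * ∑ i, c i * |α i| + 2 * |t| * ∑ i, (if α i = 0 then c i * |β i| else 0) := by
  filter_upwards [eventually_all.2 fun i => eventually_abs_add_add_abs_sub (α i) (β i)] with t ht
  simp only [Finset.mul_sum, ← Finset.sum_add_distrib]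
  refine Finset.sum_congr rfl fun i _ => ?_
  have hi := ht i
  rw [neg_mul, ← sub_eq_add_neg]
  split_ifs at hi ⊢ <;> linear_combination c i * hi

/-- `∑_{αᵢ = 0} cᵢ |βᵢ|` is half the jump of the derivative of `t ↦ ∑ cᵢ |αᵢ + t βᵢ|` at `0`. -/
lemma sum_ite_mul_abs_eq_of_forall_sum_mul_abs_eq {ι' : Type*} [Fintype ι']
    {c α β : ι → ℝ} {c' α' β' : ι' → ℝ}
    (h : ∀ t, ∑ i, c i * |α i + t * β i| = ∑ i, c' i * |α' i + t * β' i|) :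
    ∑ i, (if α i = 0 then c i * |β i| else 0) = ∑ i, (if α' i = 0 then c' i * |β' i| else 0) := by
  obtain ⟨t, ⟨ht, ht'⟩, ht0⟩ := (((eventually_sum_mul_abs_add_sum_mul_abs_neg c α β).and
    (eventually_sum_mul_abs_add_sum_mul_abs_neg c' α' β')).filter_mono nhdsWithin_le_nhds).and
    (self_mem_nhdsWithin (s := {0}ᶜ)) |>.exists
  have h0 := h 0
  simp only [zero_mul, add_zero] at h0
  have : 2 * |t| * ∑ i, (if α i = 0 then c i * |β i| else 0)
      = 2 * |t| * ∑ i, (if α' i = 0 then c' i * |β' i| else 0) := by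
    linarith [h t, h (-t)]
  exact mul_left_cancel₀ (by simpa using ht0) this

end Kink

lemma exists_dotProduct_eq_zero_forall_ne_zero {K ι κ : Type*} [Field K] [Infinite K]
    [Finite ι] [Fintype κ] [DecidableEq κ] (u : κ → K) (A : ι → κ → K)
    (hA : ∀ j, A j ∉ K ∙ u) : ∃ x, u ⬝ᵥ x = 0 ∧ ∀ j, A j ⬝ᵥ x ≠ 0 := by
  let D := dotProductEquiv K κ
  obtain ⟨x, hx, hxA⟩ := Module.Dual.exists_forall_mem_ne_zero_of_forall_exists
    (LinearMap.ker (D u)) (fun j => D (A j)) fun j => by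
      by_contra! hker
      refine hA j ?_
      obtain ⟨μ, hμ⟩ := Submodule.mem_span_singleton.1 <| by
        simpa using mem_span_of_iInf_ker_le_ker (L := fun _ : Unit => D u) (K := D (A j))
          (by simpa [SetLike.le_def] using hker)
      exact Submodule.mem_span_singleton.2 ⟨μ, D.injective (by simpa using hμ)⟩
  exact ⟨x, hx, hxA⟩

section Realization

variable {ι ι' κ : Type*} [Fintype ι] [Fintype ι'] [Fintype κ]

/-- The paper's `R(Γ)` for the network `Γ = (A, c)`. -/
def reluRealization (A : ι → κ → ℝ) (c : ι → ℝ) (x : κ → ℝ) : ℝ :=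
  ∑ i, c i * max (A i ⬝ᵥ x) 0

lemma reluRealization_sub_reluRealization_neg (A : ι → κ → ℝ) (c : ι → ℝ) (x : κ → ℝ) :
    reluRealization A c x - reluRealization (-A) c x = (∑ i, c i • A i) ⬝ᵥ x := by
  simp only [reluRealization, sum_dotProduct, smul_dotProduct, smul_eq_mul,
    ← Finset.sum_sub_distrib, ← mul_sub, Pi.neg_apply, neg_dotProduct, max_zero_sub_eq_self]

lemma reluRealization_add_reluRealization_neg (A : ι → κ → ℝ) (c : ι → ℝ) (x : κ → ℝ) :
    reluRealization A c x + reluRealization A c (-x) = ∑ i, c i * |A i ⬝ᵥ x| := by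
  simp only [reluRealization, ← Finset.sum_add_distrib, ← mul_add, dotProduct_neg,
    max_zero_add_max_neg_zero_eq_abs_self]

lemma sum_ite_mul_abs_eq_of_reluRealization_eq {A : ι → κ → ℝ} {c : ι → ℝ}
    {B : ι' → κ → ℝ} {c' : ι' → ℝ} (h : ∀ x, reluRealization A c x = reluRealization B c' x)
    (x v : κ → ℝ) :
    ∑ i, (if A i ⬝ᵥ x = 0 then c i * |A i ⬝ᵥ v| else 0)
      = ∑ i, (if B i ⬝ᵥ x = 0 then c' i * |B i ⬝ᵥ v| else 0) := by
  refine sum_ite_mul_abs_eq_of_forall_sum_mul_abs_eq fun t => ?_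
  have ht := reluRealization_add_reluRealization_neg A c (x + t • v)
  rw [h, h, reluRealization_add_reluRealization_neg] at ht
  simpa only [dotProduct_add, dotProduct_smul, smul_eq_mul] using ht.symm

lemma reluRealization_pos {A : ι → κ → ℝ} {c : ι → ℝ} {x : κ → ℝ} (hc : ∀ i, 0 ≤ c i) {j : ι}
    (hcj : 0 < c j) (hAj : 0 < A j ⬝ᵥ x) : 0 < reluRealization A c x :=
  Finset.sum_pos' (fun i _ => mul_nonneg (hc i) (le_max_right _ _))
    ⟨j, Finset.mem_univ _, mul_pos hcj (lt_max_of_lt_left hAj)⟩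

lemma exists_dotProduct_pos_of_reluRealization_pos {A : ι → κ → ℝ} {c : ι → ℝ} {x : κ → ℝ}
    (h : 0 < reluRealization A c x) : ∃ i, 0 < A i ⬝ᵥ x := by
  by_contra! hle
  refine h.ne' (Finset.sum_eq_zero fun i _ => ?_)
  rw [max_eq_right (hle i), mul_zero]

lemma exists_mem_span_singleton_of_reluRealization_eq {A : ι → κ → ℝ} {c : ι → ℝ}
    {B : ι' → κ → ℝ} {c' : ι' → ℝ} (h : ∀ x, reluRealization A c x = reluRealization B c' x)
    (hc' : ∀ i, 0 < c' i) {i : ι'} (hBi : B i ≠ 0) : ∃ j, A j ∈ ℝ ∙ B i := by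
  classical
  by_contra! hA
  obtain ⟨x, hBx, hAx⟩ := exists_dotProduct_eq_zero_forall_ne_zero (B i) A hA
  have hBv : ∀ v, B i ⬝ᵥ v = 0 := fun v => by
    have hkink := sum_ite_mul_abs_eq_of_reluRealization_eq h x v
    simp only [hAx, if_false, Finset.sum_const_zero] at hkink
    have hterm := (Finset.sum_eq_zero_iff_of_nonneg fun i' _ => ?_).1 hkink.symm i
      (Finset.mem_univ _)
    · rw [if_pos hBx] at hterm
      simpa [(hc' i).ne'] using hterm
    · split_ifs
      exacts [mul_nonneg (hc' i').le (abs_nonneg _), le_rfl]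
  exact hBi (dotProduct_self_eq_zero.1 (hBv (B i)))

lemma exists_pos_smul_eq_of_reluRealization_eq {A : ι → κ → ℝ} {c : ι → ℝ}
    {B : ι' → κ → ℝ} {c' : ι' → ℝ} (h : ∀ x, reluRealization A c x = reluRealization B c' x)
    (hc' : ∀ i, 0 < c' i) (hA : ∀ j, A j ≠ 0) {x : κ → ℝ} {j₀ : ι}
    (hx : ∀ j ≠ j₀, A j ⬝ᵥ x = 0) (hpos : 0 < reluRealization A c x) :
    ∃ i, ∃ μ : ℝ, 0 < μ ∧ B i = μ • A j₀ := by
  have hAx : 0 < A j₀ ⬝ᵥ x := by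
    obtain ⟨j, hj⟩ := exists_dotProduct_pos_of_reluRealization_pos hpos
    by_cases hj₀ : j = j₀
    · exact hj₀ ▸ hj
    · exact absurd (hx j hj₀) hj.ne'
  obtain ⟨i, hBx⟩ := exists_dotProduct_pos_of_reluRealization_pos ((h x) ▸ hpos)
  have hBi : B i ≠ 0 := by rintro hB; simp [hB] at hBx
  obtain ⟨j, hj⟩ := exists_mem_span_singleton_of_reluRealization_eq h hc' hBi
  obtain ⟨ν, hν⟩ := Submodule.mem_span_singleton.1 hj
  have hAjx : A j ⬝ᵥ x = ν * (B i ⬝ᵥ x) := by rw [← hν, smul_dotProduct, smul_eq_mul]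
  have hj₀ : j = j₀ := by
    by_contra hne
    rcases mul_eq_zero.1 (hAjx ▸ hx j hne) with hν0 | hB
    · exact hA j (by rw [← hν, hν0, zero_smul])
    · exact hBx.ne' hB
  subst hj₀
  have hνpos : 0 < ν := pos_of_mul_pos_left (hAjx ▸ hAx) hBx.le
  exact ⟨i, ν⁻¹, inv_pos.2 hνpos, by rw [← hν, inv_smul_smul₀ hνpos.ne']⟩

end Realization

lemma sobSemi_dotProduct (d : ℕ) (w : Fin d → ℝ) : sobSemi d (w ⬝ᵥ ·) = ⨆ j, |w j| := by
  let L := LinearMap.toContinuousLinearMap (dotProductEquiv ℝ (Fin d) w : (Fin d → ℝ) →ₗ[ℝ] ℝ)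
  have hderiv : ∀ x, fderiv ℝ (w ⬝ᵥ ·) x = L := fun x => L.fderiv
  simp only [sobSemi, hderiv, L, LinearMap.coe_toContinuousLinearMap', dotProductEquiv_apply_apply,
    dotProduct_single, mul_one, essSup_const']

lemma iSup_abs_single {ι : Type*} [Finite ι] [DecidableEq ι] (j₀ : ι) (r : ℝ) :
    ⨆ j, |Pi.single (M := fun _ => ℝ) j₀ r j| = |r| :=
  have : Nonempty ι := ⟨j₀⟩
  le_antisymm (ciSup_le fun j => by by_cases h : j = j₀ <;> simp [h])
    (le_ciSup_of_le (Finite.bddAbove_range _) j₀ (by simp))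

/-- The weights `aᵏ` and `cᵏ` of the paper, for real `K` in place of `k`. -/
noncomputable def innerWeights (K : ℝ) : Fin 3 → Fin 3 → ℝ :=
  ![![K, K, 1 / K], ![-K, K, 1 / K], ![0, -(√2 * K), 1 / (√2 * K)]]

noncomputable def outerWeights (K : ℝ) : Fin 3 → ℝ := ![K, K, √2 * K]

section Example

variable {K : ℝ}

lemma sum_outerWeights_smul_innerWeights (hK : K ≠ 0) :
    ∑ i, outerWeights K i • innerWeights K i = Pi.single 2 3 := by
  have hs : √2 * √2 = 2 := Real.mul_self_sqrt zero_le_two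
  have hs0 : √2 ≠ 0 := by positivity
  ext l
  fin_cases l <;> simp [Fin.sum_univ_three, innerWeights, outerWeights]
  · linear_combination (-K ^ 2) * hs
  · field_simp
    norm_num

lemma innerWeights_ne_zero (hK : K ≠ 0) (j : Fin 3) : innerWeights K j ≠ 0 := by
  intro h
  have := congrFun h 0
  have := congrFun h 1
  fin_cases j <;> simp_all [innerWeights]

lemma le_outerWeights (hK : 0 < K) (i : Fin 3) : K ≤ outerWeights K i := by
  have hs : 1 ≤ √2 := Real.one_le_sqrt.2 one_le_two
  fin_cases i <;> simp [outerWeights]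
  exact le_mul_of_one_le_left hK.le hs

lemma innerWeights_dotProduct_eq_zero {j : Fin 3} (hj : j ≠ 2) :
    innerWeights K j ⬝ᵥ ![0, -1, K ^ 2] = 0 := by
  fin_cases j <;> simp_all [innerWeights, dotProduct, Fin.sum_univ_three, sq, ← mul_assoc]

lemma innerWeights_two_dotProduct_pos (hK : 0 < K) :
    0 < innerWeights K 2 ⬝ᵥ ![0, -1, K ^ 2] := by
  simp [innerWeights, dotProduct, Fin.sum_univ_three]
  positivity

lemma exists_le_abs_smul_innerWeights_two_add (hK : 0 < K) {μ : ℝ} (hμ : 0 < μ) (i : Fin 3) :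
    ∃ l, K ≤ |μ * innerWeights K 2 l + innerWeights K i l| := by
  have hKs : K ≤ √2 * K := le_mul_of_one_le_left hK.le (Real.one_le_sqrt.2 one_le_two)
  have hμs : 0 < μ * (√2 * K) := by positivity
  fin_cases i
  · exact ⟨0, by simp [innerWeights, abs_of_pos hK]⟩
  · exact ⟨0, by simp [innerWeights, abs_of_pos hK]⟩
  · refine ⟨1, ?_⟩
    simp [innerWeights]
    rw [abs_of_nonpos (by linarith)]
    linarith

lemma exists_le_abs_sub_neg_innerWeights (hK : 0 < K) {b : Fin 3 → Fin 3 → ℝ} {c : Fin 3 → ℝ}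
    (hc : ∀ i, 0 < c i)
    (h : ∀ x, reluRealization (innerWeights K) (outerWeights K) x = reluRealization b c x) :
    ∃ i l, K ≤ |b i l - (-innerWeights K) i l| := by
  have hpos : 0 < reluRealization (innerWeights K) (outerWeights K) ![0, -1, K ^ 2] :=
    reluRealization_pos (fun i => hK.le.trans (le_outerWeights hK i))
      (hK.trans_le (le_outerWeights hK 2)) (innerWeights_two_dotProduct_pos hK)
  obtain ⟨i, μ, hμ, hb⟩ := exists_pos_smul_eq_of_reluRealization_eq h hc
    (innerWeights_ne_zero hK.ne') (fun j hj => innerWeights_dotProduct_eq_zero hj) hpos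
  obtain ⟨l, hl⟩ := exists_le_abs_smul_innerWeights_two_add hK hμ i
  exact ⟨i, l, by simpa [hb] using hl⟩

end Example

/-- Failure of inverse stability due to opposite weight vectors (Example 2.6):
with `a₁ᵏ = (k,k,1/k)`, `a₂ᵏ = (−k,k,1/k)`, `a₃ᵏ = (0,−√2k,1/(√2k))` and
`cᵏ = (k,k,√2k)`, the networks `Θ_k` (rows `a_iᵏ`) and `Γ_k` (rows `−a_iᵏ`)
satisfy `∑ c_i a_i = (0,0,3)`, their realizations differ by the linear map
`x ↦ 3x₃` with Sobolev seminorm `3`, yet every parametrization of `R(Θ_k)` is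
at parameter distance at least `k` from `Γ_k`. -/
theorem stmt_14 (k : ℕ) (hk : 1 ≤ k)
    (a : Fin 3 → Fin 3 → ℝ) (c : Fin 3 → ℝ)
    (ha : a = ![![(k : ℝ), k, 1 / k], ![-(k : ℝ), k, 1 / k],
      ![0, -(Real.sqrt 2 * k), 1 / (Real.sqrt 2 * k)]])
    (hc : c = ![(k : ℝ), k, Real.sqrt 2 * k]) :
    (∀ l : Fin 3, ∑ i, c i * a i l = if l = 2 then 3 else 0) ∧
    (∀ x : Fin 3 → ℝ,
      (∑ i, c i * max (∑ l, a i l * x l) 0) -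
        (∑ i, c i * max (∑ l, (-(a i)) l * x l) 0) = 3 * x 2) ∧
    sobSemi 3 (fun x =>
      (∑ i, c i * max (∑ l, a i l * x l) 0) -
        ∑ i, c i * max (∑ l, (-(a i)) l * x l) 0) = 3 ∧
    ∀ (b : Fin 3 → Fin 3 → ℝ) (cc : Fin 3 → ℝ),
      (∀ x : Fin 3 → ℝ,
        ∑ i, cc i * max (∑ l, b i l * x l) 0 =
          ∑ i, c i * max (∑ l, a i l * x l) 0) →
      max (⨆ i, ⨆ l, |b i l - (-(a i)) l|) (⨆ i, |cc i - c i|) ≥ (k : ℝ) := by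
  have hK : (0 : ℝ) < k := by exact_mod_cast hk
  obtain rfl : a = innerWeights k := ha
  obtain rfl : c = outerWeights k := hc
  have hsum := sum_outerWeights_smul_innerWeights hK.ne'
  have hdiff : ∀ x, reluRealization (innerWeights k) (outerWeights k) x
      - reluRealization (-innerWeights k) (outerWeights k) x = Pi.single 2 3 ⬝ᵥ x := fun x => by
    rw [reluRealization_sub_reluRealization_neg, hsum]
  refine ⟨fun l => ?_, fun x => (hdiff x).trans (single_dotProduct x 3 2), ?_, fun b cc hb => ?_⟩
  · simpa [Finset.sum_apply, Pi.single_apply] using congrFun hsum l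
  · refine (congrArg (sobSemi 3) (funext hdiff)).trans ?_
    rw [sobSemi_dotProduct, iSup_abs_single, abs_of_pos three_pos]
  · by_cases hcc : ∃ i, (k : ℝ) ≤ |cc i - outerWeights k i|
    · obtain ⟨i, hi⟩ := hcc
      exact le_max_of_le_right (le_ciSup_of_le (Finite.bddAbove_range _) i hi)
    · simp only [not_exists, not_le] at hcc
      have hccpos : ∀ i, 0 < cc i := fun i => by
        linarith [(abs_lt.1 (hcc i)).1, le_outerWeights hK i]
      obtain ⟨i, l, hil⟩ := exists_le_abs_sub_neg_innerWeights hK hccpos fun x => (hb x).symm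
      exact le_max_of_le_left (le_ciSup_of_le (Finite.bddAbove_range _) i
        (le_ciSup_of_le (Finite.bddAbove_range _) l hil))
end

section
/- Let Γ_k = ((k,0), 1/k²) ∈ ℝ^{1×2} × ℝ, whose realization is x ↦ (1/k²)·ReLU(k x₁) = (1/k)·ReLU(x₁), and let g_k(x) = (1/k)·ReLU(x₂). Then for every parametrization Φ_k of g_k (necessarily of the form (c)·ReLU(⟨(0,a),x⟩) with a, c > 0, ac = 1/k), it holds that |g_k − R(Γ_k)|_{W^{1,∞}} ≤ 1/k while ‖Φ_k − Γ_k‖_∞ ≥ k. -/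
open MeasureTheory

/-!
For `k ≥ 0`, `(1/k²) ReLU(k x₁) = (1/k) ReLU(x₁)`, so
`g_k − R(Γ_k) = (1/k)(ReLU(x₂) − ReLU(x₁))`. Off the two coordinate hyperplanes, a null set,
this function is locally linear with partial derivatives `(1/k)(ε₂ δ_{j2} − ε₁ δ_{j1})`,
`εᵢ ∈ {0, 1}`, all at most `1/k` in absolute value.
A realization `c · ReLU(⟨a, x⟩)` that vanishes on the whole `x₁`-axis without vanishing
identically must have `a₁ = 0`, whence `|a₁ − k| = k`.
-/

theorem one_div_sq_mul_relu_mul {k : ℝ} (hk : 0 ≤ k) (t : ℝ) :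
    1 / k ^ 2 * max (k * t) 0 = 1 / k * max t 0 := by
  rw [show max (k * t) 0 = k * max t 0 by rw [mul_max_of_nonneg _ _ hk, mul_zero]]
  rcases eq_or_ne k 0 with rfl | hk0
  · simp
  · field_simp

theorem hasDerivAt_relu {t : ℝ} (ht : t ≠ 0) :
    HasDerivAt (fun t : ℝ => max t 0) (if 0 < t then 1 else 0) t := by
  rcases ht.lt_or_gt with hneg | hpos
  · rw [if_neg hneg.not_gt]
    refine (hasDerivAt_const t (0 : ℝ)).congr_of_eventuallyEq ?_
    filter_upwards [eventually_lt_nhds hneg] with s hs using max_eq_right hs.le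
  · rw [if_pos hpos]
    refine (hasDerivAt_id t).congr_of_eventuallyEq ?_
    filter_upwards [eventually_gt_nhds hpos] with s hs using max_eq_left hs.le

theorem hasFDerivAt_relu_apply {ι : Type*} [Fintype ι] (i : ι) {x : ι → ℝ}
    (hx : x i ≠ 0) :
    HasFDerivAt (fun y : ι → ℝ => max (y i) 0)
      ((if 0 < x i then 1 else 0 : ℝ) •
        ContinuousLinearMap.proj (R := ℝ) (φ := fun _ : ι => ℝ) i) x :=
  HasDerivAt.comp_hasFDerivAt (h₂ := fun t => max t 0) x (hasDerivAt_relu hx)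
    (hasFDerivAt_apply i x)

theorem volume_setOf_apply_eq_zero {ι : Type*} [Fintype ι] (i : ι) :
    volume {x : ι → ℝ | x i = 0} = 0 := by
  classical
  let π : (ι → ℝ) →ₗ[ℝ] ℝ := LinearMap.proj i
  have hker : {x : ι → ℝ | x i = 0} = LinearMap.ker π := by
    ext x
    simp [π]
  rw [hker]
  refine Measure.addHaar_submodule _ _ fun htop => ?_
  simpa [π] using LinearMap.congr_fun (LinearMap.ker_eq_top.mp htop) (Pi.single i 1)

theorem sobSemi_le_of_ae_le {d : ℕ} {f : (Fin d → ℝ) → ℝ} {C : ℝ} (hC : 0 ≤ C)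
    (h : ∀ᵐ x, ∀ j, |fderiv ℝ f x (Pi.single j 1)| ≤ C) : sobSemi d f ≤ C := by
  refine Filter.limsup_le_of_le ?_ (h.mono fun x hx => Real.iSup_le hx hC)
  exact Filter.isCoboundedUnder_le_of_le _ (x := 0) fun x => Real.iSup_nonneg fun j => abs_nonneg _

theorem sobSemi_smul_relu_sub_relu_le {d : ℕ} (s : ℝ) (i j : Fin d) :
    sobSemi d (fun x => s * (max (x j) 0 - max (x i) 0)) ≤ |s| := by
  refine sobSemi_le_of_ae_le (abs_nonneg s) ?_
  have hnull : ∀ᵐ x : Fin d → ℝ, x i ≠ 0 ∧ x j ≠ 0 :=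
    (measure_eq_zero_iff_ae_notMem.mp (volume_setOf_apply_eq_zero i)).and
      (measure_eq_zero_iff_ae_notMem.mp (volume_setOf_apply_eq_zero j))
  filter_upwards [hnull] with x ⟨hi, hj⟩ l
  have hderiv : HasFDerivAt (fun x : Fin d → ℝ => s * (max (x j) 0 - max (x i) 0)) _ x :=
    ((hasFDerivAt_relu_apply j hj).sub (hasFDerivAt_relu_apply i hi)).const_mul s
  rw [hderiv.fderiv]
  simp only [smul_apply, sub_apply, ContinuousLinearMap.proj_apply, smul_eq_mul, abs_mul]
  refine mul_le_of_le_one_right (abs_nonneg s) (abs_sub_le_of_nonneg_of_le ?_ ?_ ?_ ?_) <;>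
    simp only [Pi.single_apply] <;> split_ifs <;> norm_num

theorem apply_zero_eq_zero_of_relu_eq {a : Fin 2 → ℝ} {c s : ℝ} (hs : s ≠ 0)
    (hreal : ∀ x : Fin 2 → ℝ, c * max (a 0 * x 0 + a 1 * x 1) 0 = s * max (x 1) 0) :
    a 0 = 0 := by
  have hc : c ≠ 0 := by
    rintro rfl
    simpa [eq_comm, hs] using hreal ![0, 1]
  have hnonpos : a 0 ≤ 0 := by simpa [hc] using hreal ![1, 0]
  have hnonneg : 0 ≤ a 0 := by simpa [hc] using hreal ![-1, 0]
  exact le_antisymm hnonpos hnonneg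

theorem stmt_15_general (k : ℕ) (a : Fin 2 → ℝ) (c : ℝ)
    (hreal : ∀ x : Fin 2 → ℝ,
      c * max (a 0 * x 0 + a 1 * x 1) 0 = (1 / (k : ℝ)) * max (x 1) 0) :
    sobSemi 2 (fun x =>
        (1 / (k : ℝ)) * max (x 1) 0 - (1 / (k : ℝ) ^ 2) * max ((k : ℝ) * x 0) 0) ≤ 1 / k ∧
      max (max |a 0 - k| |a 1|) |c - 1 / (k : ℝ) ^ 2| ≥ (k : ℝ) := by
  constructor
  · have hf : (fun x : Fin 2 → ℝ =>
        (1 / (k : ℝ)) * max (x 1) 0 - (1 / (k : ℝ) ^ 2) * max ((k : ℝ) * x 0) 0) =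
        fun x => 1 / (k : ℝ) * (max (x 1) 0 - max (x 0) 0) := by
      funext x
      rw [one_div_sq_mul_relu_mul k.cast_nonneg, mul_sub]
    rw [hf]
    simpa using sobSemi_smul_relu_sub_relu_le (1 / (k : ℝ)) 0 1
  · rcases eq_or_ne k 0 with rfl | hk
    · simp
    have ha : a 0 = 0 := apply_zero_eq_zero_of_relu_eq (by positivity) hreal
    refine le_max_of_le_left (le_max_of_le_left ?_)
    rw [ha, zero_sub, abs_neg, Nat.abs_cast]

/-- Failure of inverse stability due to unbalancedness: `Γ_k = ((k,0),1/k²)`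
realizes `x ↦ (1/k)ReLU(x₁)`, and `g_k(x) = (1/k)ReLU(x₂)` is Sobolev-close to
it, yet every parametrization `(a,c)` of `g_k` satisfies
`‖Φ_k − Γ_k‖_∞ ≥ k`. -/
theorem stmt_15 (k : ℕ) (hk : 1 ≤ k) (a : Fin 2 → ℝ) (c : ℝ)
    (hreal : ∀ x : Fin 2 → ℝ,
      c * max (a 0 * x 0 + a 1 * x 1) 0 = (1 / (k : ℝ)) * max (x 1) 0) :
    sobSemi 2 (fun x =>
        (1 / (k : ℝ)) * max (x 1) 0 - (1 / (k : ℝ) ^ 2) * max ((k : ℝ) * x 0) 0) ≤ 1 / k ∧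
      max (max |a 0 - k| |a 1|) |c - 1 / (k : ℝ) ^ 2| ≥ (k : ℝ) :=
  stmt_15_general k a c hreal
end
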